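/- arXiv:1406.1899 — 2 statements merged into one kernel-verified Lean document; each statement's English description precedes it below -/
import Mathlib

section
/- Let 0 < γ < 1, r₀ > 0, 0 < r ≤ r₀, and let y = (0,0,r), z = (0,0,cr) with c ∈ [2/3, 4/5]. Then there exists C > 0 depending only on γ such that (1/r₀^γ) ∫_{ℝ³₋} |x - y|^{γ-2} |x - z|^{-2} dx ≤ (C/r₀)(r/r₀)^{γ-1}, where ℝ³₋ = {x ∈ ℝ³ : x₃ < 0}. -/
/-!
On the lower half-space `|x - y| ≥ r`, and since `|y - z| = (1 - c) r ≤ (1 - c)/c · |x - z|`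
the triangle inequality gives `c |x - y| ≤ |x - z|`. So the integrand is at most
`c⁻² |x - y|^(γ - 4)` on `{|x - y| ≥ r}`, and in polar coordinates around `y` the integral of
the latter over all of `ℝ³` is `3 |B(0,1)| r^(γ - 1) / (1 - γ)`, finite because `γ - 4 < -3`.
-/

open MeasureTheory Set Metric

lemma le_norm_sub_single_of_nonpos {ι : Type*} [Fintype ι] [DecidableEq ι]
    {x : EuclideanSpace ℝ ι} {i : ι} (hx : x i ≤ 0) {a : ℝ} (ha : 0 ≤ a) :
    a ≤ ‖x - EuclideanSpace.single i a‖ :=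
  calc a ≤ |x i - a| := by rw [abs_of_nonpos (by linarith)]; linarith
    _ = ‖(x - EuclideanSpace.single i a) i‖ := by simp
    _ ≤ ‖x - EuclideanSpace.single i a‖ := PiLp.norm_apply_le _ i

lemma mul_norm_sub_le_norm_sub {E : Type*} [SeminormedAddCommGroup E] {x y z : E} {c r : ℝ}
    (hc0 : 0 ≤ c) (hc1 : c ≤ 1) (hyz : ‖y - z‖ ≤ (1 - c) * r) (hxz : c * r ≤ ‖x - z‖) :
    c * ‖x - y‖ ≤ ‖x - z‖ := by
  have := norm_sub_le_norm_sub_add_norm_sub x z y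
  rw [norm_sub_rev z y] at this
  nlinarith

lemma mul_norm_sub_single_le_norm_sub_single {ι : Type*} [Fintype ι] [DecidableEq ι]
    {x : EuclideanSpace ℝ ι} {i : ι} (hx : x i ≤ 0) {c r : ℝ} (hc0 : 0 ≤ c) (hc1 : c ≤ 1)
    (hr : 0 ≤ r) :
    c * ‖x - EuclideanSpace.single i r‖ ≤ ‖x - EuclideanSpace.single i (c * r)‖ := by
  refine mul_norm_sub_le_norm_sub hc0 hc1 ?_ (le_norm_sub_single_of_nonpos hx (by positivity))
  rw [← dist_eq_norm, PiLp.dist_single_same, Real.dist_eq, abs_of_nonneg (by nlinarith)]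
  linarith

lemma rpow_mul_inv_sq_le {c Y Z : ℝ} (hc : 0 < c) (hY : 0 < Y) (hYZ : c * Y ≤ Z) (s : ℝ) :
    Y ^ s * (Z ^ 2)⁻¹ ≤ (c ^ 2)⁻¹ * Y ^ (s - 2) := by
  have hsq : (Z ^ 2)⁻¹ ≤ (c ^ 2)⁻¹ * (Y ^ 2)⁻¹ := by
    rw [← mul_inv, ← mul_pow]
    gcongr
  calc Y ^ s * (Z ^ 2)⁻¹ ≤ Y ^ s * ((c ^ 2)⁻¹ * (Y ^ 2)⁻¹) := by gcongr
    _ = (c ^ 2)⁻¹ * Y ^ (s - 2) := by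
      rw [Real.rpow_sub hY, Real.rpow_two]
      ring

lemma pow_smul_indicator_Ici_rpow {n : ℕ} (hn : 1 ≤ n) {p r y : ℝ} (hy : 0 < y) :
    y ^ (n - 1) • (Ici r).indicator (· ^ (-p)) y =
      (Ici r).indicator (· ^ ((n : ℝ) - 1 - p)) y := by
  by_cases hyr : y ∈ Ici r
  · simp only [indicator_of_mem hyr, smul_eq_mul, ← Real.rpow_natCast, Nat.cast_sub hn,
      Nat.cast_one, ← Real.rpow_add hy, sub_eq_add_neg]
  · simp [indicator_of_notMem hyr]

section HaarIntegral

variable {E : Type*} [NormedAddCommGroup E] [NormedSpace ℝ E] [FiniteDimensional ℝ E]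
  [Nontrivial E] [MeasurableSpace E] [BorelSpace E] (μ : Measure E) [μ.IsAddHaarMeasure]
  {p r : ℝ}

local notation "dim" => Module.finrank ℝ E

lemma integrable_indicator_Ici_norm_rpow (hp : (dim : ℝ) < p) (hr : 0 < r) :
    Integrable (fun x : E => (Ici r).indicator (· ^ (-p)) ‖x‖) μ := by
  have hdim : 1 ≤ dim := Module.finrank_pos
  rw [integrable_fun_norm_addHaar μ]
  refine IntegrableOn.congr_fun ?_ (fun y hy => (pow_smul_indicator_Ici_rpow hdim hy).symm)
    measurableSet_Ioi
  refine (integrable_indicator_iff measurableSet_Ici).2 ?_ |>.integrableOn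
  exact (integrableOn_Ici_iff_integrableOn_Ioi).2 (integrableOn_Ioi_rpow_of_lt (by linarith) hr)

lemma integral_indicator_Ici_norm_rpow (hp : (dim : ℝ) < p) (hr : 0 < r) :
    ∫ x : E, (Ici r).indicator (· ^ (-p)) ‖x‖ ∂μ =
      dim * μ.real (ball 0 1) / (p - dim) * r ^ (dim - p) := by
  have hdim : 1 ≤ dim := Module.finrank_pos
  rw [integral_fun_norm_addHaar μ, setIntegral_congr_fun measurableSet_Ioi
    (fun y hy => pow_smul_indicator_Ici_rpow hdim hy), setIntegral_indicator measurableSet_Ici,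
    inter_eq_self_of_subset_right (Ici_subset_Ioi.2 hr), integral_Ici_eq_integral_Ioi,
    integral_Ioi_rpow_of_lt (by linarith) hr, nsmul_eq_mul, smul_eq_mul,
    show (dim : ℝ) - 1 - p + 1 = dim - p by ring, neg_div, ← div_neg, neg_sub]
  ring

lemma setIntegral_norm_rpow_mul_inv_sq_le {S : Set E} (hS : MeasurableSet S) {y z : E}
    {c r s : ℝ} (hc : 0 < c) (hr : 0 < r) (hs : (dim : ℝ) < 2 - s)
    (hy : ∀ x ∈ S, r ≤ ‖x - y‖) (hz : ∀ x ∈ S, c * ‖x - y‖ ≤ ‖x - z‖) :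
    ∫ x in S, ‖x - y‖ ^ s * (‖x - z‖ ^ 2)⁻¹ ∂μ ≤
      (c ^ 2)⁻¹ * (dim * μ.real (ball 0 1) / (2 - s - dim) * r ^ (dim - (2 - s))) := by
  set tail : E → ℝ := fun x => (Ici r).indicator (· ^ (-(2 - s))) ‖x‖
  have htail : Integrable (fun x => (c ^ 2)⁻¹ * tail (x - y)) μ :=
    ((integrable_indicator_Ici_norm_rpow μ hs hr).comp_sub_right y).const_mul _
  have hle : ∀ x, S.indicator (fun x => ‖x - y‖ ^ s * (‖x - z‖ ^ 2)⁻¹) x ≤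
      (c ^ 2)⁻¹ * tail (x - y) := by
    intro x
    by_cases hx : x ∈ S
    · rw [indicator_of_mem hx, show tail (x - y) = ‖x - y‖ ^ (s - 2) by
        simp only [tail, indicator_of_mem (show ‖x - y‖ ∈ Ici r from hy x hx), neg_sub]]
      exact rpow_mul_inv_sq_le hc (hr.trans_le (hy x hx)) (hz x hx) s
    · rw [indicator_of_notMem hx]
      exact mul_nonneg (by positivity) (indicator_nonneg (fun t ht =>
        Real.rpow_nonneg (hr.le.trans ht) _) _)
  calc ∫ x in S, ‖x - y‖ ^ s * (‖x - z‖ ^ 2)⁻¹ ∂μ ≤ ∫ x, (c ^ 2)⁻¹ * tail (x - y) ∂μ := by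
        rw [← integral_indicator hS]
        refine integral_mono_of_nonneg (.of_forall fun x => ?_) htail (.of_forall hle)
        exact indicator_nonneg (fun x _ => by positivity) x
    _ = _ := by
      rw [integral_const_mul, integral_sub_right_eq_self tail y,
        integral_indicator_Ici_norm_rpow μ hs hr]

end HaarIntegral

lemma one_div_rpow_mul_rpow_sub_one {r r₀ : ℝ} (hr : 0 ≤ r) (hr₀ : 0 < r₀) (K γ : ℝ) :
    1 / r₀ ^ γ * (K * r ^ (γ - 1)) = K / r₀ * (r / r₀) ^ (γ - 1) := by
  rw [Real.div_rpow hr hr₀.le, Real.rpow_sub_one hr₀.ne']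
  field_simp

theorem half_space_integral_estimate_general (γ : ℝ) (hγ1 : γ < 1) :
    ∃ C : ℝ, 0 < C ∧ ∀ r₀ r c : ℝ, 0 < r₀ → 0 < r → r ≤ r₀ →
      c ∈ Set.Icc (2 / 3 : ℝ) (4 / 5) →
      (1 / r₀ ^ γ) *
        (∫ x in {x : EuclideanSpace ℝ (Fin 3) | x 2 < 0},
          ‖x - EuclideanSpace.single (2 : Fin 3) r‖ ^ (γ - 2) *
            (‖x - EuclideanSpace.single (2 : Fin 3) (c * r)‖ ^ 2)⁻¹) ≤
        (C / r₀) * (r / r₀) ^ (γ - 1) := by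
  set K := 3 * volume.real (ball (0 : EuclideanSpace ℝ (Fin 3)) 1) / (1 - γ)
  have hK : 0 < K := by
    have := ENNReal.toReal_pos (measure_ball_pos volume (0 : EuclideanSpace ℝ (Fin 3)) one_pos).ne'
      measure_ball_lt_top.ne
    exact div_pos (mul_pos three_pos this) (by linarith)
  refine ⟨9 / 4 * K, by positivity, fun r₀ r c hr₀ hr _ ⟨hc1, hc2⟩ => ?_⟩
  have hI := setIntegral_norm_rpow_mul_inv_sq_le volume
    (S := {x : EuclideanSpace ℝ (Fin 3) | x 2 < 0}) (s := γ - 2)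
    (measurableSet_lt (by fun_prop) measurable_const) (by linarith) hr
    (by rw [finrank_euclideanSpace_fin]; push_cast; linarith)
    (fun x hx => le_norm_sub_single_of_nonpos hx.le hr.le)
    (fun x hx => mul_norm_sub_single_le_norm_sub_single hx.le (by linarith) (by linarith)
      hr.le)
  rw [finrank_euclideanSpace_fin, show (2 : ℝ) - (γ - 2) - (3 : ℕ) = 1 - γ by push_cast; ring,
    show ((3 : ℕ) : ℝ) - (2 - (γ - 2)) = γ - 1 by push_cast; ring, Nat.cast_ofNat] at hI
  have hc : (c ^ 2)⁻¹ ≤ 9 / 4 := by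
    rw [inv_le_comm₀ (by positivity) (by norm_num)]
    nlinarith
  calc (1 / r₀ ^ γ) * _ ≤ (1 / r₀ ^ γ) * (9 / 4 * K * r ^ (γ - 1)) := by
        gcongr
        exact hI.trans (by rw [mul_assoc]; gcongr)
    _ = 9 / 4 * K / r₀ * (r / r₀) ^ (γ - 1) := one_div_rpow_mul_rpow_sub_one hr.le hr₀ _ γ

/-- Estimate of the integral over the lower half-space:
`(1/r₀^γ) ∫_{ℝ³₋} |x-y|^{γ-2}|x-z|⁻² dx ≤ (C/r₀)(r/r₀)^{γ-1}`,
with `y = (0,0,r)`, `z = (0,0,cr)`, `c ∈ [2/3,4/5]`, and `C = C(γ)`. -/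
theorem half_space_integral_estimate (γ : ℝ) (hγ0 : 0 < γ) (hγ1 : γ < 1) :
    ∃ C : ℝ, 0 < C ∧ ∀ r₀ r c : ℝ, 0 < r₀ → 0 < r → r ≤ r₀ →
      c ∈ Set.Icc (2 / 3 : ℝ) (4 / 5) →
      (1 / r₀ ^ γ) *
        (∫ x in {x : EuclideanSpace ℝ (Fin 3) | x 2 < 0},
          ‖x - EuclideanSpace.single (2 : Fin 3) r‖ ^ (γ - 2) *
            (‖x - EuclideanSpace.single (2 : Fin 3) (c * r)‖ ^ 2)⁻¹) ≤
        (C / r₀) * (r / r₀) ^ (γ - 1) :=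
  half_space_integral_estimate_general γ hγ1
end

section
/- Let C₁, C₂ > 0, 0 < γ < 1, and suppose a nonnegative quantity Q satisfies, for every r ∈ (0, r₀], Q ≤ C₁ E ((r/r₀)^β + m^{δ^{b|ln(a r/r₀)| + 1}}) for given β > 0, δ ∈ (0,1), a, b > 0, and m ∈ (0,1). Then there exists C depending only on C₁, β, δ, a, b such that Q ≤ C E |ln m|^{-β/(2b|ln δ|)} for all sufficiently small m. -/
/-!
Write `m = exp (-exp t)`, so that `|ln m|^{-p} = exp (-p t)` with `p = β / (2 b |ln δ|)`, and take
`r = r₀ exp (-t / (2 b |ln δ|))`. Then `(r/r₀)^β = exp (-p t)` exactly, while the exponent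
`b |ln (a r / r₀)| + 1` exceeds `b |ln a| + 1` by at most `t / (2 |ln δ|)`. Hence `δ` to that power
is at least `c exp (-t / 2)` with `c = δ^{b |ln a| + 1}`, the doubly exponential term is at most
`exp (-c exp (t / 2))`, and this is eventually below `exp (-p t)`.
-/

open Real Filter Set Topology

lemma abs_log_mul_exp_le (a x : ℝ) : |log (a * exp x)| ≤ |log a| + |x| := by
  rcases eq_or_ne a 0 with rfl | ha
  · simp
  · rw [log_mul ha (exp_pos x).ne', log_exp]
    exact abs_add_le _ _

lemma exp_neg_exp_rpow_rpow_le {δ b : ℝ} (hδ0 : 0 < δ) (hδ1 : δ < 1) (hb : 0 < b) (a : ℝ)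
    {t : ℝ} (ht : 0 ≤ t) :
    exp (-exp t) ^ δ ^ (b * |log (a * exp (-(t / (2 * b * |log δ|))))| + 1)
      ≤ exp (-(δ ^ (b * |log a| + 1) * exp (t / 2))) := by
  set D := |log δ|
  have hlogδ : log δ = -D := by simp only [D, abs_of_neg (log_neg hδ0 hδ1), neg_neg]
  have hD : 0 < D := abs_pos.2 (log_neg hδ0 hδ1).ne
  have hexponent : b * |log (a * exp (-(t / (2 * b * D))))| + 1
      ≤ (b * |log a| + 1) + t / (2 * D) :=
    calc b * |log (a * exp (-(t / (2 * b * D))))| + 1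
        ≤ b * (|log a| + |-(t / (2 * b * D))|) + 1 := by gcongr; exact abs_log_mul_exp_le _ _
      _ = (b * |log a| + 1) + t / (2 * D) := by
        rw [abs_neg, abs_of_nonneg (a := t / (2 * b * D)) (by positivity)]
        field_simp
        ring
  have hδpow : δ ^ ((b * |log a| + 1) + t / (2 * D))
      = δ ^ (b * |log a| + 1) * exp (-(t / 2)) := by
    rw [rpow_add hδ0, rpow_def_of_pos hδ0 (t / (2 * D)), hlogδ]
    congr 2
    field_simp
  calc exp (-exp t) ^ δ ^ (b * |log (a * exp (-(t / (2 * b * D))))| + 1)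
      = exp (-exp t * δ ^ (b * |log (a * exp (-(t / (2 * b * D))))| + 1)) := (exp_mul _ _).symm
    _ ≤ exp (-exp t * (δ ^ (b * |log a| + 1) * exp (-(t / 2)))) := by
      rw [exp_le_exp, ← hδpow]
      exact mul_le_mul_of_nonpos_left (rpow_le_rpow_of_exponent_ge hδ0 hδ1.le hexponent)
        (neg_nonpos.2 (exp_pos t).le)
    _ = exp (-(δ ^ (b * |log a| + 1) * exp (t / 2))) := by
      rw [show exp (t / 2) = exp t * exp (-(t / 2)) by rw [← exp_add]; ring_nf]
      ring_nf

lemma eventually_mul_le_mul_exp_half (p : ℝ) {c : ℝ} (hc : 0 < c) :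
    ∀ᶠ t in atTop, p * t ≤ c * exp (t / 2) := by
  filter_upwards [((isLittleO_pow_exp_pos_mul_atTop 1 one_half_pos).const_mul_left p).bound hc]
    with t ht
  calc p * t ≤ ‖p * t ^ 1‖ := by simpa using le_abs_self (p * t)
    _ ≤ c * ‖exp (1 / 2 * t)‖ := ht
    _ = c * exp (t / 2) := by rw [norm_of_nonneg (exp_pos _).le]; ring_nf

lemma exists_Ioo_forall_log_neg_log {P : ℝ → Prop} (h : ∀ᶠ t in atTop, P t) :
    ∃ m₀ ∈ Ioo (0 : ℝ) 1, ∀ m ∈ Ioo 0 m₀, P (log (-log m)) := by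
  have hlim : Tendsto (fun m => log (-log m)) (𝓝[>] 0) atTop :=
    tendsto_log_atTop.comp (tendsto_neg_atBot_atTop.comp tendsto_log_nhdsGT_zero)
  obtain ⟨u, hu, hsub⟩ := mem_nhdsGT_iff_exists_Ioo_subset.1 (hlim h)
  refine ⟨min u (1 / 2), ⟨lt_min hu one_half_pos, by linarith [min_le_right u (1 / 2)]⟩, ?_⟩
  exact fun m hm => hsub ⟨hm.1, hm.2.trans_le (min_le_left _ _)⟩

theorem optimize_r_general (C₁ β δ a b : ℝ) (hC₁ : 0 < C₁)
    (hδ0 : 0 < δ) (hδ1 : δ < 1) (hb : 0 < b) :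
    ∃ C : ℝ, 0 < C ∧ ∃ m₀ : ℝ, m₀ ∈ Set.Ioo (0 : ℝ) 1 ∧
      ∀ m : ℝ, m ∈ Set.Ioo (0 : ℝ) m₀ →
        ∀ r₀ E Q : ℝ, 0 < r₀ → 0 ≤ E → 0 ≤ Q →
          (∀ r : ℝ, r ∈ Set.Ioc (0 : ℝ) r₀ →
            Q ≤ C₁ * E * ((r / r₀) ^ β +
              m ^ (δ ^ (b * |Real.log (a * r / r₀)| + 1)))) →
          Q ≤ C * E * |Real.log m| ^ (-(β / (2 * b * |Real.log δ|))) := by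
  set D := |log δ|
  set p := β / (2 * b * D)
  obtain ⟨m₀, hm₀, hsmall⟩ := exists_Ioo_forall_log_neg_log ((eventually_ge_atTop 0).and
    (eventually_mul_le_mul_exp_half p (rpow_pos_of_pos hδ0 (b * |log a| + 1))))
  refine ⟨2 * C₁, by positivity, m₀, hm₀, fun m hm r₀ E Q hr₀ hE _ hbound => ?_⟩
  obtain ⟨ht, hgrowth⟩ := hsmall m hm
  set t := log (-log m)
  have hlogm : -log m = exp t := (exp_log (neg_pos.2 (log_neg hm.1 (hm.2.trans hm₀.2)))).symm
  have hm_eq : m = exp (-exp t) := by rw [← hlogm, neg_neg, exp_log hm.1]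
  set ρ := exp (-(t / (2 * b * D)))
  have hr : r₀ * ρ ∈ Ioc 0 r₀ :=
    ⟨by positivity, mul_le_of_le_one_right hr₀.le (exp_le_one_iff.2 (neg_nonpos.2 (by positivity)))⟩
  have hfirst : (r₀ * ρ / r₀) ^ β = exp (-(p * t)) := by
    rw [mul_div_cancel_left₀ _ hr₀.ne', ← exp_mul]
    congr 1
    simp only [p]
    field_simp
  have hsecond : m ^ δ ^ (b * |log (a * (r₀ * ρ) / r₀)| + 1) ≤ exp (-(p * t)) := by
    rw [mul_div_assoc, mul_div_cancel_left₀ _ hr₀.ne', hm_eq]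
    exact (exp_neg_exp_rpow_rpow_le hδ0 hδ1 hb a ht).trans (exp_le_exp.2 (by linarith))
  calc Q ≤ C₁ * E * ((r₀ * ρ / r₀) ^ β + m ^ δ ^ (b * |log (a * (r₀ * ρ) / r₀)| + 1)) :=
        hbound _ hr
    _ ≤ C₁ * E * (2 * exp (-(p * t))) := by rw [hfirst]; gcongr; linarith
    _ = 2 * C₁ * E * |log m| ^ (-p) := by
      rw [abs_of_neg (neg_pos.1 (hlogm ▸ exp_pos t)), hlogm, ← exp_mul]
      ring_nf

/-- Optimization in `r` of a bound combining a power `(r/r₀)^β` with a doubly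
exponential factor `m^{δ^{b|ln(ar/r₀)|+1}}`: it yields a single logarithmic
modulus `C E |ln m|^{-β/(2b|ln δ|)}` for all sufficiently small `m`. -/
theorem optimize_r (C₁ β δ a b : ℝ) (hC₁ : 0 < C₁) (hβ : 0 < β)
    (hδ0 : 0 < δ) (hδ1 : δ < 1) (ha : 0 < a) (hb : 0 < b) :
    ∃ C : ℝ, 0 < C ∧ ∃ m₀ : ℝ, m₀ ∈ Set.Ioo (0 : ℝ) 1 ∧
      ∀ m : ℝ, m ∈ Set.Ioo (0 : ℝ) m₀ →
        ∀ r₀ E Q : ℝ, 0 < r₀ → 0 ≤ E → 0 ≤ Q →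
          (∀ r : ℝ, r ∈ Set.Ioc (0 : ℝ) r₀ →
            Q ≤ C₁ * E * ((r / r₀) ^ β +
              m ^ (δ ^ (b * |Real.log (a * r / r₀)| + 1)))) →
          Q ≤ C * E * |Real.log m| ^ (-(β / (2 * b * |Real.log δ|))) :=
  optimize_r_general C₁ β δ a b hC₁ hδ0 hδ1 hb
end
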